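/- The rule R_y is sound: if D x ∩ (⋃ over all indices b with b_i ∈ D y_i and b_k = b of D a[b]) = ∅, then removing b from D y_k preserves the set of solutions of the constraint x = a[y₁,…,yₙ]. -/

import Mathlib

open Finset

/-- `v` is a variable of the array constraint `x = a[y₁,…,yₙ]`. -/
def InCon {V α : Type*} {n : ℕ} (x : V) (y : Fin n → V) (valid : Finset (Fin n → α))
    (a : (Fin n → α) → V) (v : V) : Prop :=
  v = x ∨ (∃ i, v = y i) ∨ ∃ b ∈ valid, v = a b

/-- `σ` is a solution of the array constraint `x = a[y₁,…,yₙ]` with domains `D`: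
it respects the domains of the constraint's variables, the selected index is valid,
and `x` equals the selected array variable. -/
def IsSol {V α : Type*} [DecidableEq α] {n : ℕ} (D : V → Finset α) (x : V) (y : Fin n → V)
    (valid : Finset (Fin n → α)) (a : (Fin n → α) → V) (σ : V → α) : Prop :=
  (∀ v, InCon x y valid a v → σ v ∈ D v) ∧
    (fun i => σ (y i)) ∈ valid ∧ σ x = σ (a fun i => σ (y i))

/-- Linearity: all variables occurring in the constraint are pairwise distinct. -/
def Linear {V α : Type*} {n : ℕ} (x : V) (y : Fin n → V) (valid : Finset (Fin n → α))
    (a : (Fin n → α) → V) : Prop :=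
  Function.Injective y ∧
    (∀ b ∈ valid, ∀ b' ∈ valid, a b = a b' → b = b') ∧
    (∀ i, x ≠ y i) ∧ (∀ b ∈ valid, x ≠ a b) ∧ ∀ i, ∀ b ∈ valid, y i ≠ a b

section IsSol

variable {V α : Type*} [DecidableEq α] {n : ℕ} {D D' : V → Finset α} {x : V} {y : Fin n → V}
  {valid : Finset (Fin n → α)} {a : (Fin n → α) → V} {σ : V → α}

theorem IsSol.mono (h : IsSol D x y valid a σ) (hD : D ≤ D') :
    IsSol D' x y valid a σ :=
  ⟨fun v hv => hD v (h.1 v hv), h.2⟩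

theorem IsSol.update_sdiff [DecidableEq V] (h : IsSol D x y valid a σ) {v : V} {s : Finset α}
    (hv : σ v ∉ s) : IsSol (Function.update D v (D v \ s)) x y valid a σ := by
  refine ⟨fun w hw => ?_, h.2⟩
  by_cases hwv : w = v
  · subst hwv
    simpa only [Function.update_self, mem_sdiff] using ⟨h.1 w hw, hv⟩
  · simpa only [Function.update_of_ne hwv] using h.1 w hw

theorem IsSol.apply_ne_of_inter_eq_empty (h : IsSol D x y valid a σ) {k : Fin n} {b : α}
    (hcond : D x ∩ ((valid.filter fun b' => (∀ i, b' i ∈ D (y i)) ∧ b' k = b).biUnion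
      fun b' => D (a b')) = ∅) :
    σ (y k) ≠ b := by
  obtain ⟨hdom, hvalid, hx⟩ := h
  intro hb
  have hsupp : (fun i => σ (y i)) ∈ valid.filter
      fun b' => (∀ i, b' i ∈ D (y i)) ∧ b' k = b :=
    mem_filter.2 ⟨hvalid, fun i => hdom _ (Or.inr (Or.inl ⟨i, rfl⟩)), hb⟩
  have hcell : σ x ∈ D (a fun i => σ (y i)) := hx ▸ hdom _ (Or.inr (Or.inr ⟨_, hvalid, rfl⟩))
  have hmem := mem_inter.2
    ⟨hdom x (Or.inl rfl), (mem_biUnion (t := fun b' => D (a b'))).2 ⟨_, hsupp, hcell⟩⟩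
  simp only [hcond, notMem_empty] at hmem

end IsSol

theorem stmt3_general {V α : Type*} [DecidableEq V] [DecidableEq α] {n : ℕ}
    (D : V → Finset α) (x : V) (y : Fin n → V) (valid : Finset (Fin n → α))
    (a : (Fin n → α) → V)
    (k : Fin n) (b : α)
    (hcond : D x ∩ ((valid.filter fun b' => (∀ i, b' i ∈ D (y i)) ∧ b' k = b).biUnion
      fun b' => D (a b')) = ∅) :
    ∀ σ : V → α,
      IsSol D x y valid a σ ↔
        IsSol (Function.update D (y k) (D (y k) \ {b})) x y valid a σ := by
  intro σ
  refine ⟨fun h => h.update_sdiff ?_, fun h => h.mono ?_⟩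
  · exact notMem_singleton.2 (h.apply_ne_of_inter_eq_empty hcond)
  · exact update_le_self_iff.2 sdiff_subset

/-- Soundness of rule R_y: if `D x` is disjoint from the union of `D (a b')` over all
valid indices `b'` with `b' i ∈ D (y i)` and `b' k = b`, then removing `b` from
`D (y k)` preserves the solution set of the linear constraint `x = a[y₁,…,yₙ]`. -/
theorem stmt3 {V α : Type*} [DecidableEq V] [DecidableEq α] {n : ℕ}
    (D : V → Finset α) (x : V) (y : Fin n → V) (valid : Finset (Fin n → α))
    (a : (Fin n → α) → V) (hlin : Linear x y valid a)
    (k : Fin n) (b : α)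
    (hcond : D x ∩ ((valid.filter fun b' => (∀ i, b' i ∈ D (y i)) ∧ b' k = b).biUnion
      fun b' => D (a b')) = ∅) :
    ∀ σ : V → α,
      IsSol D x y valid a σ ↔
        IsSol (Function.update D (y k) (D (y k) \ {b})) x y valid a σ :=
  stmt3_general D x y valid a k b hcond
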